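/- For 0 ≤ k ≤ n and r, s ≥ 0, G_{a,b}(n,k;r+s) = Σ_{i=k}^{n} C(n,i) · G_{a,b}(i,k;r) · ∏_{j=0}^{n−i−1}(a·j + (a+b)·s). -/

import Mathlib

open Finset

/-- The generalized r-Lah numbers `G_{a,b}(n,k;r)`. -/
def genLah {R : Type*} [CommRing R] (a b : R) (r : ℕ) : ℕ → ℕ → R
  | 0, 0 => 1
  | 0, _ + 1 => 0
  | n + 1, 0 => (a * ((n : R) + (r : R)) + b * (r : R)) * genLah a b r n 0
  | n + 1, k + 1 => genLah a b r n k +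
      (a * (n : R) + b * ((k : R) + 1) + (a + b) * (r : R)) * genLah a b r n (k + 1)

/-! Both sides satisfy the recurrence of `G_{a,b}(n,k;r+s)` in `n`. Pascal's rule splits the
binomial convolution of `i ↦ G_{a,b}(i,k;r)` with `m ↦ ∏_{j<m} (a j + (a+b) s)` at level `n+1`
into a part where the index of `G` moves up, handled by the recurrence of `G`, and a part where
the product gains the factor `a (n-i) + (a+b) s`; the weights `a i + b k + (a+b) r` and
`a (n-i) + (a+b) s` add up to `a n + b k + (a+b)(r+s)`. -/

section

variable {R : Type*} [CommRing R]

theorem genLah_eq_zero_of_lt (a b : R) (r : ℕ) {n k : ℕ} (h : n < k) : genLah a b r n k = 0 := by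
  induction n generalizing k with
  | zero => obtain ⟨k, rfl⟩ := Nat.exists_eq_add_one_of_ne_zero (by omega : k ≠ 0); rfl
  | succ n ih =>
    obtain ⟨k, rfl⟩ := Nat.exists_eq_add_one_of_ne_zero (by omega : k ≠ 0)
    rw [genLah, ih (by omega), ih (by omega), mul_zero, add_zero]

theorem sum_range_choose_succ_mul_prod (a c : R) (f : ℕ → R) (n : ℕ) :
    ∑ i ∈ range (n + 2), ((n + 1).choose i : R) * f i * ∏ j ∈ range (n + 1 - i), (a * j + c) =
      ∑ i ∈ range (n + 1), (n.choose i : R) * (f (i + 1) + (a * (n - i) + c) * f i) *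
        ∏ j ∈ range (n - i), (a * j + c) := by
  simp_rw [mul_assoc]
  rw [sum_choose_succ_mul (fun i m => f i * ∏ j ∈ range m, (a * j + c)), ← sum_add_distrib]
  refine sum_congr rfl fun i hi => ?_
  have hin : i ≤ n := Nat.lt_succ_iff.mp (mem_range.mp hi)
  rw [Nat.sub_add_comm hin, prod_range_succ, Nat.cast_sub hin]
  ring

theorem genLah_add_eq_sum_range (a b : R) (r s n k : ℕ) :
    genLah a b (r + s) n k =
      ∑ i ∈ range (n + 1), (n.choose i : R) * genLah a b r i k *
        ∏ j ∈ range (n - i), (a * (j : R) + (a + b) * (s : R)) := by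
  induction n generalizing k with
  | zero => cases k <;> simp [genLah]
  | succ n ih =>
    rw [sum_range_choose_succ_mul_prod]
    cases k with
    | zero =>
      rw [genLah, ih, mul_sum]
      refine sum_congr rfl fun i _ => ?_
      rw [genLah]
      push_cast
      ring
    | succ k =>
      rw [genLah, ih, ih, mul_sum, ← sum_add_distrib]
      refine sum_congr rfl fun i _ => ?_
      rw [genLah]
      push_cast
      ring

end

theorem genLah_r_add_s_general {R : Type*} [CommRing R] (a b : R) (r s n k : ℕ) :
    genLah a b (r + s) n k =
      ∑ i ∈ Icc k n, (n.choose i : R) * genLah a b r i k *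
        ∏ j ∈ range (n - i), (a * (j : R) + (a + b) * (s : R)) := by
  rw [genLah_add_eq_sum_range]
  refine (sum_subset (fun i hi => mem_range_succ_iff.mpr (mem_Icc.mp hi).2) ?_).symm
  intro i hin hi
  have hik : i < k := by simp only [mem_range, mem_Icc] at hin hi; omega
  rw [genLah_eq_zero_of_lt a b r hik, mul_zero, zero_mul]

theorem genLah_r_add_s {R : Type*} [CommRing R] (a b : R) (r s n k : ℕ) (hkn : k ≤ n) :
    genLah a b (r + s) n k =
      ∑ i ∈ Icc k n, (n.choose i : R) * genLah a b r i k *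
        ∏ j ∈ range (n - i), (a * (j : R) + (a + b) * (s : R)) :=
  genLah_r_add_s_general a b r s n k
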